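/- arXiv:1810.00265 — 2 statements merged into one kernel-verified Lean document; each statement's English description precedes it below -/
import Mathlib

section
/- Let φ, ψ be locally finite subsets of ℝ^d such that (φ,ψ) contains no infinite descending chain. Then φ_∞ = ∅ or ψ_∞ = ∅ (i.e. at least one of the two configurations is completely matched by the mutual nearest neighbour matching), and there is a unique stable partial matching from φ to ψ, namely the one produced by the mutual nearest neighbour matching. -/
open MeasureTheory Set Metric
open scoped ENNReal ENat NNReal Pointwise

noncomputable section

/-- `ℝ^d`. -/
abbrev V (d : ℕ) := EuclideanSpace ℝ (Fin d)

variable {d : ℕ}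

/-- `x` is lexicographically strictly smaller than `y`. -/
def lexLT (x y : V d) : Prop := ∃ i : Fin d, x i < y i ∧ ∀ j : Fin d, j < i → x j = y j

/-- A point `p` of the first configuration prefers `x` to `y` (both in the second
configuration): closer, or at equal distance and lexicographically smaller. -/
def prefPhi (p x y : V d) : Prop :=
  dist x p < dist y p ∨ (dist x p = dist y p ∧ lexLT x y)

/-- A point `x` of the second configuration prefers `p` to `q` (both in the first
configuration): closer, or at equal distance and lexicographically greater. -/
def prefPsi (x p q : V d) : Prop :=
  dist p x < dist q x ∨ (dist p x = dist q x ∧ lexLT q p)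

/-- Preference over `Option` values: every point is preferred to `∞` (= `none`). -/
def prefPhiOpt (p x : V d) : Option (V d) → Prop
  | none => True
  | some y => prefPhi p x y

/-- Preference over `Option` values: every point is preferred to `∞` (= `none`). -/
def prefPsiOpt (x p : V d) : Option (V d) → Prop
  | none => True
  | some q => prefPsi x p q

/-- `p ∈ φ` and `x ∈ ψ` are mutually most preferred points of each other. -/
def MutualNN (φ ψ : Set (V d)) (p x : V d) : Prop :=
  p ∈ φ ∧ x ∈ ψ ∧ (∀ y ∈ ψ, y ≠ x → prefPhi p x y) ∧ (∀ q ∈ φ, q ≠ p → prefPsi x p q)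

/-- The pair `(φ_n, ψ_n)` of configurations of still unmatched points after `n` rounds of the
mutual nearest neighbour matching algorithm. -/
def stages (φ ψ : Set (V d)) : ℕ → Set (V d) × Set (V d)
  | 0 => (φ, ψ)
  | n + 1 =>
      let s := stages φ ψ n
      (s.1 \ {p | ∃ x, MutualNN s.1 s.2 p x}, s.2 \ {x | ∃ p, MutualNN s.1 s.2 p x})

/-- `φ_∞`, the set of points of `φ` never matched by the algorithm. -/
def phiInf (φ ψ : Set (V d)) : Set (V d) := ⋂ n, (stages φ ψ n).1

/-- `ψ_∞`, the set of points of `ψ` never matched by the algorithm. -/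
def psiInf (φ ψ : Set (V d)) : Set (V d) := ⋂ n, (stages φ ψ n).2

open Classical in
/-- The mutual nearest neighbour matching `τ(φ, ψ, ·)`; the value `none` represents `∞`,
points outside `φ ∪ ψ` are mapped to themselves. -/
def matchTau (φ ψ : Set (V d)) (z : V d) : Option (V d) :=
  if z ∈ φ then
    if h : ∃ x, ∃ n, MutualNN (stages φ ψ n).1 (stages φ ψ n).2 z x then some h.choose
    else none
  else if z ∈ ψ then
    if h : ∃ p, ∃ n, MutualNN (stages φ ψ n).1 (stages φ ψ n).2 p z then some h.choose
    else none
  else some z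

/-- A locally finite subset of `ℝ^d`. -/
def LocFinite (φ : Set (V d)) : Prop := ∀ r : ℝ, (φ ∩ closedBall 0 r).Finite

/-- `t` is a partial matching between `φ` and `ψ` (with `none` = unmatched). -/
def IsPartialMatching (φ ψ : Set (V d)) (t : V d → Option (V d)) : Prop :=
  (∀ p ∈ φ, ∀ x, t p = some x → x ∈ ψ) ∧ (∀ x ∈ ψ, ∀ p, t x = some p → p ∈ φ) ∧
  (∀ p ∈ φ, ∀ x ∈ ψ, (t p = some x ↔ t x = some p))

/-- `t` is a stable partial matching between `φ` and `ψ`: a partial matching admitting no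
unstable pair `(p, x)`, i.e. no pair where `x` prefers `p` to `t x` and `p` prefers `x`
to `t p`. -/
def IsStableMatching (φ ψ : Set (V d)) (t : V d → Option (V d)) : Prop :=
  IsPartialMatching φ ψ t ∧
  ¬ ∃ p ∈ φ, ∃ x ∈ ψ, prefPsiOpt x p (t x) ∧ prefPhiOpt p x (t p)

/-- `(z 0, …, z (n-1))`, `n ≥ 2`, is a descending chain in `(φ, ψ)`: points at even positions
belong to `φ`, points at odd positions to `ψ`, and every interior point prefers its successor
to its predecessor. (This corresponds to the 1-based chain `(z_1, …, z_n)` of the paper.) -/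
def DescChain (φ ψ : Set (V d)) (n : ℕ) (z : ℕ → V d) : Prop :=
  2 ≤ n ∧ (∀ i < n, if Even i then z i ∈ φ else z i ∈ ψ) ∧
    ∀ i, 1 ≤ i → i + 1 < n →
      (if Even i then prefPhi (z i) (z (i + 1)) (z (i - 1))
       else prefPsi (z i) (z (i + 1)) (z (i - 1)))

/-- Descending chain starting with a point of `ψ` (even positions in `ψ`, odd in `φ`). -/
def DescChainPsiStart (φ ψ : Set (V d)) (n : ℕ) (z : ℕ → V d) : Prop :=
  2 ≤ n ∧ (∀ i < n, if Even i then z i ∈ ψ else z i ∈ φ) ∧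
    ∀ i, 1 ≤ i → i + 1 < n →
      (if Even i then prefPsi (z i) (z (i + 1)) (z (i - 1))
       else prefPhi (z i) (z (i + 1)) (z (i - 1)))

/-- An infinite descending chain in `(φ, ψ)`. -/
def InfDescChain (φ ψ : Set (V d)) (z : ℕ → V d) : Prop :=
  (∀ i, if Even i then z i ∈ φ else z i ∈ ψ) ∧
    ∀ i, 1 ≤ i →
      (if Even i then prefPhi (z i) (z (i + 1)) (z (i - 1))
       else prefPsi (z i) (z (i + 1)) (z (i - 1)))

/-- The union of balls `F_c` associated with a chain `c` of length `n`:
`B(c 0, ‖c 1 − c 0‖) ∪ ⋃_{i=1}^{n-1} B(c i, ‖c i − c (i-1)‖)`. -/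
def chainBalls (n : ℕ) (c : ℕ → V d) : Set (V d) :=
  closedBall (c 0) (dist (c 1) (c 0)) ∪
    ⋃ i ∈ Finset.Ico 1 n, closedBall (c i) (dist (c i) (c (i - 1)))

open Classical in
/-- The matching flower `F(φ, ψ, z)` of a point `z`: all of `ℝ^d` if `z ∈ φ ∪ ψ` is unmatched,
`{z}` if `z ∉ φ ∪ ψ`, and otherwise the union of the ball sets of all competing chains for `z`,
i.e. descending chains starting at `z` whose second point is equal to, or preferred by `z` to,
the matching partner of `z`. -/
def flower (φ ψ : Set (V d)) (z : V d) : Set (V d) :=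
  if z ∈ φ then
    match matchTau φ ψ z with
    | none => Set.univ
    | some w =>
        ⋃ (n : ℕ) (c : ℕ → V d)
          (_ : DescChain φ ψ n c ∧ c 0 = z ∧ (c 1 = w ∨ prefPhi z (c 1) w)),
          chainBalls n c
  else if z ∈ ψ then
    match matchTau φ ψ z with
    | none => Set.univ
    | some w =>
        ⋃ (n : ℕ) (c : ℕ → V d)
          (_ : DescChainPsiStart φ ψ n c ∧ c 0 = z ∧ (c 1 = w ∨ prefPsi z (c 1) w)),
          chainBalls n c
  else {z}

/-- The lattice `ℤ^d` as a subset of `ℝ^d`. -/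
def lattice (d : ℕ) : Set (V d) := Set.range (fun k : Fin d → ℤ => (WithLp.toLp 2 (fun i => (k i : ℝ)) : V d))


/-- The point of `ℝ^d` with the given integer coordinates. -/
def intVec {d : ℕ} (k : Fin d → ℤ) : V d := WithLp.toLp 2 (fun i => (k i : ℝ))

/-- Translation of a configuration by a vector. -/
def shift (φ : Set (V d)) (x : V d) : Set (V d) := (· + x) '' φ

/-- The set of matched points of `ψ` in the mutual nearest neighbour matching of `φ`
with `ψ`. -/
def matchedPsi (φ ψ : Set (V d)) : Set (V d) := {x ∈ ψ | matchTau φ ψ x ≠ none}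

open Classical in
/-- The matching status `M(φ, ψ, z)`: `1` if `z` is matched, `0` otherwise. -/
def matchStatus (φ ψ : Set (V d)) (z : V d) : ℝ :=
  if ∃ w, matchTau φ ψ z = some w ∧ w ∈ φ ∪ ψ then 1 else 0

/-- The σ-field on configurations generated by the counting maps `φ ↦ #(φ ∩ B)`,
`B` Borel. -/
def configSA (d : ℕ) : MeasurableSpace (Set (V d)) :=
  MeasurableSpace.generateFrom
    {A | ∃ (B : Set (V d)) (n : ℕ), MeasurableSet B ∧ A = {φ | (φ ∩ B).encard = (n : ℕ∞)}}

/-- Measurability of a configuration-valued map with respect to the counting σ-field. -/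
def PPMeasurable {Ω : Type*} [MeasurableSpace Ω] (Φ : Ω → Set (V d)) : Prop :=
  ∀ A : Set (Set (V d)), MeasurableSet[configSA d] A → MeasurableSet (Φ ⁻¹' A)

/-- The closed unit cube `[0,1]^d`. -/
def cube01 (d : ℕ) : Set (V d) := {y | ∀ i, y i ∈ Set.Icc (0 : ℝ) 1}

/-- The half-open unit cube `[0,1)^d`. -/
def cube01' (d : ℕ) : Set (V d) := {y | ∀ i, y i ∈ Set.Ico (0 : ℝ) 1}

/-- `Ψ` is a point process: measurable (for the counting σ-field) and almost surely locally
finite. -/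
def IsPointProcess {Ω : Type*} [MeasurableSpace Ω] (P : Measure Ω) (Ψ : Ω → Set (V d)) : Prop :=
  PPMeasurable Ψ ∧ ∀ᵐ ω ∂P, LocFinite (Ψ ω)

/-- `Ψ` is a stationary point process: the distribution is invariant under all
translations. -/
def IsStationaryPP {Ω : Type*} [MeasurableSpace Ω] (P : Measure Ω) (Ψ : Ω → Set (V d)) : Prop :=
  IsPointProcess P Ψ ∧
    ∀ (x : V d) (A : Set (Set (V d))), MeasurableSet[configSA d] A →
      P {ω | shift (Ψ ω) x ∈ A} = P {ω | Ψ ω ∈ A}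

/-- `Ψ` has intensity `α`: the expected number of points in `[0,1]^d` equals `α`. -/
def HasIntensity {Ω : Type*} [MeasurableSpace Ω] (P : Measure Ω) (Ψ : Ω → Set (V d))
    (α : ℝ) : Prop :=
  ∫⁻ ω, ((Ψ ω ∩ cube01 d).encard : ℝ≥0∞) ∂P = ENNReal.ofReal α

/-- `Ψ` is a stationary Poisson process with intensity `α`: Poisson counts with mean
`α λ_d(B)` on every Borel set of finite volume, and independent counts on pairwise disjoint
Borel sets. -/
def IsPoissonPP {Ω : Type*} [MeasurableSpace Ω] (P : Measure Ω) (Ψ : Ω → Set (V d))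
    (α : ℝ) : Prop :=
  IsPointProcess P Ψ ∧
  (∀ B : Set (V d), MeasurableSet B → volume B < ⊤ → ∀ n : ℕ,
      P {ω | (Ψ ω ∩ B).encard = (n : ℕ∞)} =
        ENNReal.ofReal (Real.exp (-(α * (volume B).toReal)) *
          (α * (volume B).toReal) ^ n / n.factorial)) ∧
  (∀ (k : ℕ) (B : Fin k → Set (V d)), (∀ i, MeasurableSet (B i)) →
      Pairwise (Function.onFun Disjoint B) →
      ∀ n : Fin k → ℕ,
        P {ω | ∀ i, (Ψ ω ∩ B i).encard = (n i : ℕ∞)} =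
          ∏ i, P {ω | (Ψ ω ∩ B i).encard = (n i : ℕ∞)})

/-- `Ψ` has `n`-th correlation function `ρ`: for every measurable `f ≥ 0`, the expected sum of
`f` over `n`-tuples of pairwise distinct points of `Ψ` equals `∫ f ρ`. -/
def HasCorrelationFunction {Ω : Type*} [MeasurableSpace Ω] (P : Measure Ω)
    (Ψ : Ω → Set (V d)) (n : ℕ) (ρ : (Fin n → V d) → ℝ≥0∞) : Prop :=
  Measurable ρ ∧
    ∀ f : (Fin n → V d) → ℝ≥0∞, Measurable f →
      ∫⁻ ω, ∑' t : {t : Fin n → V d // (∀ i, t i ∈ Ψ ω) ∧ Function.Injective t}, f t ∂P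
        = ∫⁻ x, f x * ρ x ∂(volume : Measure (Fin n → V d))

/-- The `α_{p,q}(s)` mixing coefficient of a point process: supremum of covariances of
`{0,1}`-valued functionals of the restrictions of `Ψ` to sets `A`, `B` of volume at most
`p` resp. `q` and mutual distance at least `s`. -/
def mixingCoef {Ω : Type*} [MeasurableSpace Ω] (P : Measure Ω) (Ψ : Ω → Set (V d))
    (p q s : ℝ) : ℝ :=
  sSup {v : ℝ | ∃ (S T : Set (Set (V d))) (A B : Set (V d)),
    MeasurableSet[configSA d] S ∧ MeasurableSet[configSA d] T ∧
    MeasurableSet A ∧ MeasurableSet B ∧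
    volume A ≤ ENNReal.ofReal p ∧ volume B ≤ ENNReal.ofReal q ∧
    (∀ a ∈ A, ∀ b ∈ B, s ≤ dist a b) ∧
    v = |(P {ω | Ψ ω ∩ A ∈ S ∧ Ψ ω ∩ B ∈ T}).toReal -
          (P {ω | Ψ ω ∩ A ∈ S}).toReal * (P {ω | Ψ ω ∩ B ∈ T}).toReal|}

/-!
If `φ_∞` and `ψ_∞` were both nonempty, alternately passing to the most preferred point of the
other unmatched set would produce an infinite descending chain: two points of `φ_∞` and `ψ_∞`
that prefer each other most are impossible, because by local finiteness all their competitors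
are matched after finitely many rounds, after which the two would be mutual nearest neighbours.
Once one side is exhausted, an unstable pair of `τ` is refuted at the round in which the first
of its two points is matched, and any stable matching contains every pair matched in round `n`,
by strong induction on `n`.
-/

section Preferences

def lexOf (x : V d) : Lex (Fin d → ℝ) := toLex (WithLp.ofLp x)

lemma lexOf_injective : Function.Injective (lexOf (d := d)) :=
  fun _ _ h => WithLp.ofLp_injective 2 (toLex.injective h)

lemma lexLT_iff {x y : V d} : lexLT x y ↔ lexOf x < lexOf y :=
  ⟨fun ⟨i, h1, h2⟩ => ⟨i, h2, h1⟩, fun ⟨i, h1, h2⟩ => ⟨i, h2, h1⟩⟩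

/-- Both preferences compare distances to the centre `c` first and break ties by `e`:
`e = lexOf` for points of `φ`, and the order dual of `lexOf` for points of `ψ`. -/
def distKey {β : Type*} (c : V d) (e : V d → β) (y : V d) : ℝ ×ₗ β := toLex (dist y c, e y)

lemma distKey_injective {β : Type*} {e : V d → β} (he : Function.Injective e) (c : V d) :
    Function.Injective (distKey c e) :=
  fun _ _ h => he (congrArg Prod.snd (toLex.injective h))

lemma prefPhi_iff {p x y : V d} : prefPhi p x y ↔ distKey p lexOf x < distKey p lexOf y := by
  rw [distKey, distKey, Prod.Lex.toLex_lt_toLex, ← lexLT_iff]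
  rfl

lemma prefPsi_iff {x p q : V d} :
    prefPsi x p q ↔ distKey x (OrderDual.toDual ∘ lexOf) p < distKey x (OrderDual.toDual ∘ lexOf) q := by
  rw [distKey, distKey, Prod.Lex.toLex_lt_toLex, Function.comp_apply, Function.comp_apply,
    OrderDual.toDual_lt_toDual, ← lexLT_iff]
  rfl

lemma prefPhi_irrefl {p x : V d} : ¬ prefPhi p x x := fun h => lt_irrefl _ (prefPhi_iff.1 h)

lemma prefPsi_irrefl {x p : V d} : ¬ prefPsi x p p := fun h => lt_irrefl _ (prefPsi_iff.1 h)

lemma prefPhi_asymm {p x y : V d} (h : prefPhi p x y) : ¬ prefPhi p y x :=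
  fun h' => lt_asymm (prefPhi_iff.1 h) (prefPhi_iff.1 h')

lemma prefPsi_asymm {x p q : V d} (h : prefPsi x p q) : ¬ prefPsi x q p :=
  fun h' => lt_asymm (prefPsi_iff.1 h) (prefPsi_iff.1 h')

lemma LocFinite.mono {S T : Set (V d)} (hT : LocFinite T) (h : S ⊆ T) : LocFinite S :=
  fun r => (hT r).subset (inter_subset_inter_left _ h)

lemma LocFinite.finite_setOf_distKey_le {β : Type*} [LinearOrder β] {S : Set (V d)}
    (hS : LocFinite S) (c : V d) (e : V d → β) (b : ℝ ×ₗ β) :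
    {y ∈ S | distKey c e y ≤ b}.Finite := by
  refine (hS ((ofLex b).1 + dist c 0)).subset fun y hy =>
    ⟨hy.1, closedBall_subset_closedBall' le_rfl (mem_closedBall.2 ?_)⟩
  rcases Prod.Lex.le_iff.1 hy.2 with h | h
  exacts [h.le, h.1.le]

lemma LocFinite.exists_forall_distKey_le {β : Type*} [LinearOrder β] {S : Set (V d)}
    (hS : LocFinite S) (hne : S.Nonempty) (c : V d) (e : V d → β) :
    ∃ x ∈ S, ∀ y ∈ S, distKey c e x ≤ distKey c e y := by
  obtain ⟨s, hs⟩ := hne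
  obtain ⟨x, hx, hmin⟩ := exists_min_image _ (distKey c e)
    (hS.finite_setOf_distKey_le c e (distKey c e s)) ⟨s, hs, le_rfl⟩
  refine ⟨x, hx.1, fun y hy => ?_⟩
  rcases le_total (distKey c e y) (distKey c e s) with h | h
  exacts [hmin y ⟨hy, h⟩, hx.2.trans h]

lemma LocFinite.exists_forall_prefPhi {S : Set (V d)} (hS : LocFinite S) (hne : S.Nonempty)
    (p : V d) : ∃ x ∈ S, ∀ y ∈ S, y ≠ x → prefPhi p x y := by
  obtain ⟨x, hx, hmin⟩ := hS.exists_forall_distKey_le hne p lexOf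
  exact ⟨x, hx, fun y hy hyx => prefPhi_iff.2 <| (hmin y hy).lt_of_ne
    fun h => hyx (distKey_injective lexOf_injective p h).symm⟩

lemma LocFinite.exists_forall_prefPsi {S : Set (V d)} (hS : LocFinite S) (hne : S.Nonempty)
    (x : V d) : ∃ p ∈ S, ∀ q ∈ S, q ≠ p → prefPsi x p q := by
  obtain ⟨p, hp, hmin⟩ := hS.exists_forall_distKey_le hne x (OrderDual.toDual ∘ lexOf)
  exact ⟨p, hp, fun q hq hqp => prefPsi_iff.2 <| (hmin q hq).lt_of_ne
    fun h => hqp (distKey_injective (OrderDual.toDual.injective.comp lexOf_injective) x h).symm⟩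

lemma LocFinite.finite_setOf_not_prefPhi {S : Set (V d)} (hS : LocFinite S) (p x : V d) :
    {y ∈ S | ¬ prefPhi p x y}.Finite :=
  (hS.finite_setOf_distKey_le p lexOf (distKey p lexOf x)).subset
    fun _ hy => ⟨hy.1, not_lt.1 (prefPhi_iff.not.1 hy.2)⟩

lemma LocFinite.finite_setOf_not_prefPsi {S : Set (V d)} (hS : LocFinite S) (x p : V d) :
    {q ∈ S | ¬ prefPsi x p q}.Finite :=
  (hS.finite_setOf_distKey_le x _ (distKey x (OrderDual.toDual ∘ lexOf) p)).subset
    fun _ hq => ⟨hq.1, not_lt.1 (prefPsi_iff.not.1 hq.2)⟩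

end Preferences

section Stages

variable {φ ψ : Set (V d)} {m n : ℕ} {p q x y z : V d}

abbrev MatchedAt (φ ψ : Set (V d)) (n : ℕ) (p x : V d) : Prop :=
  MutualNN (stages φ ψ n).1 (stages φ ψ n).2 p x

lemma mem_stages_fst_iff :
    p ∈ (stages φ ψ n).1 ↔ p ∈ φ ∧ ∀ m < n, ∀ x, ¬ MatchedAt φ ψ m p x := by
  induction n with
  | zero => simp [stages]
  | succ n ih =>
    rw [Nat.forall_lt_succ_right, ← and_assoc, ← ih]
    simp [stages]

lemma mem_stages_snd_iff :
    x ∈ (stages φ ψ n).2 ↔ x ∈ ψ ∧ ∀ m < n, ∀ p, ¬ MatchedAt φ ψ m p x := by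
  induction n with
  | zero => simp [stages]
  | succ n ih =>
    rw [Nat.forall_lt_succ_right, ← and_assoc, ← ih]
    simp [stages]

lemma stages_fst_subset : (stages φ ψ n).1 ⊆ φ := fun _ hp => (mem_stages_fst_iff.1 hp).1

lemma stages_snd_subset : (stages φ ψ n).2 ⊆ ψ := fun _ hx => (mem_stages_snd_iff.1 hx).1

lemma stages_fst_antitone : Antitone fun n => (stages φ ψ n).1 :=
  antitone_nat_of_succ_le fun _ => sdiff_subset

lemma stages_snd_antitone : Antitone fun n => (stages φ ψ n).2 :=
  antitone_nat_of_succ_le fun _ => sdiff_subset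

lemma mem_phiInf_iff : p ∈ phiInf φ ψ ↔ p ∈ φ ∧ ∀ n x, ¬ MatchedAt φ ψ n p x := by
  simp only [phiInf, mem_iInter, mem_stages_fst_iff]
  exact ⟨fun h => ⟨(h 0).1, fun n => (h (n + 1)).2 n n.lt_succ_self⟩,
    fun h _ => ⟨h.1, fun m _ => h.2 m⟩⟩

lemma mem_psiInf_iff : x ∈ psiInf φ ψ ↔ x ∈ ψ ∧ ∀ n p, ¬ MatchedAt φ ψ n p x := by
  simp only [psiInf, mem_iInter, mem_stages_snd_iff]
  exact ⟨fun h => ⟨(h 0).1, fun n => (h (n + 1)).2 n n.lt_succ_self⟩,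
    fun h _ => ⟨h.1, fun m _ => h.2 m⟩⟩

lemma phiInf_subset : phiInf φ ψ ⊆ φ := fun _ hp => (mem_phiInf_iff.1 hp).1

lemma psiInf_subset : psiInf φ ψ ⊆ ψ := fun _ hx => (mem_psiInf_iff.1 hx).1

lemma exists_matchedAt_of_notMem_stages_fst (hp : p ∈ φ) (h : p ∉ (stages φ ψ n).1) :
    ∃ m < n, ∃ x, MatchedAt φ ψ m p x := by
  simpa [mem_stages_fst_iff, hp] using h

lemma exists_matchedAt_of_notMem_stages_snd (hx : x ∈ ψ) (h : x ∉ (stages φ ψ n).2) :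
    ∃ m < n, ∃ p, MatchedAt φ ψ m p x := by
  simpa [mem_stages_snd_iff, hx] using h

lemma MatchedAt.notMem_stages_fst (h : MatchedAt φ ψ m p x) (hmn : m < n) :
    p ∉ (stages φ ψ n).1 :=
  fun hp => (mem_stages_fst_iff.1 hp).2 m hmn x h

lemma MatchedAt.notMem_stages_snd (h : MatchedAt φ ψ m p x) (hmn : m < n) :
    x ∉ (stages φ ψ n).2 :=
  fun hx => (mem_stages_snd_iff.1 hx).2 m hmn p h

lemma MatchedAt.eq_of_fst (h : MatchedAt φ ψ m p x) (h' : MatchedAt φ ψ n p y) : x = y := by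
  obtain rfl : m = n := by
    by_contra hne
    rcases lt_or_gt_of_ne hne with hlt | hlt
    exacts [h.notMem_stages_fst hlt h'.1, h'.notMem_stages_fst hlt h.1]
  by_contra hne
  exact prefPhi_asymm (h.2.2.1 y h'.2.1 (Ne.symm hne)) (h'.2.2.1 x h.2.1 hne)

lemma MatchedAt.eq_of_snd (h : MatchedAt φ ψ m p x) (h' : MatchedAt φ ψ n q x) : p = q := by
  obtain rfl : m = n := by
    by_contra hne
    rcases lt_or_gt_of_ne hne with hlt | hlt
    exacts [h.notMem_stages_snd hlt h'.2.1, h'.notMem_stages_snd hlt h.2.1]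
  by_contra hne
  exact prefPsi_asymm (h.2.2.2 q h'.1 (Ne.symm hne)) (h'.2.2.2 p h.1 hne)

lemma matchedAt_zero_self (hzφ : z ∈ φ) (hzψ : z ∈ ψ) : MatchedAt φ ψ 0 z z :=
  ⟨hzφ, hzψ, fun _ _ hy => Or.inl (by simpa using dist_pos.2 hy),
    fun _ _ hq => Or.inl (by simpa using dist_pos.2 hq)⟩

lemma MatchedAt.not_prefPhi (h : MatchedAt φ ψ n p y) (hx : x ∈ (stages φ ψ n).2) :
    ¬ prefPhi p x y := by
  intro hxy
  obtain rfl | hne := eq_or_ne x y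
  · exact prefPhi_irrefl hxy
  · exact prefPhi_asymm hxy (h.2.2.1 x hx hne)

lemma MatchedAt.not_prefPsi (h : MatchedAt φ ψ n q x) (hp : p ∈ (stages φ ψ n).1) :
    ¬ prefPsi x p q := by
  intro hpq
  obtain rfl | hne := eq_or_ne p q
  · exact prefPsi_irrefl hpq
  · exact prefPsi_asymm hpq (h.2.2.2 p hp hne)

lemma eventually_notMem_stages_snd (h : y ∉ psiInf φ ψ) :
    ∀ᶠ n in Filter.atTop, y ∉ (stages φ ψ n).2 := by
  obtain ⟨n, hn⟩ : ∃ n, y ∉ (stages φ ψ n).2 := by simpa [psiInf] using h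
  exact Filter.eventually_atTop.2 ⟨n, fun m hm hy => hn (stages_snd_antitone hm hy)⟩

lemma eventually_notMem_stages_fst (h : q ∉ phiInf φ ψ) :
    ∀ᶠ n in Filter.atTop, q ∉ (stages φ ψ n).1 := by
  obtain ⟨n, hn⟩ : ∃ n, q ∉ (stages φ ψ n).1 := by simpa [phiInf] using h
  exact Filter.eventually_atTop.2 ⟨n, fun m hm hq => hn (stages_fst_antitone hm hq)⟩

end Stages
section Matching

variable {φ ψ : Set (V d)} {p x z w : V d}

lemma dite_choose_eq_some_iff {α : Type*} {P : α → Prop} [Decidable (∃ a, P a)]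
    (hP : ∀ a b, P a → P b → a = b) {b : α} :
    (if h : ∃ a, P a then some h.choose else none) = some b ↔ P b := by
  split_ifs with h
  · exact ⟨fun hb => Option.some_injective _ hb ▸ h.choose_spec,
      fun hb => congrArg some (hP _ _ h.choose_spec hb)⟩
  · simpa using fun hb => h ⟨b, hb⟩

lemma matchTau_eq_some_iff_of_mem_phi (hp : p ∈ φ) :
    matchTau φ ψ p = some x ↔ ∃ n, MatchedAt φ ψ n p x := by
  rw [matchTau, if_pos hp]
  classical
  exact dite_choose_eq_some_iff fun _ _ ⟨_, h⟩ ⟨_, h'⟩ => MatchedAt.eq_of_fst h h'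

lemma matchTau_eq_some_iff_of_mem_psi (hx : x ∈ ψ) :
    matchTau φ ψ x = some p ↔ ∃ n, MatchedAt φ ψ n p x := by
  by_cases hxφ : x ∈ φ
  · have hxx := matchedAt_zero_self hxφ hx
    rw [(matchTau_eq_some_iff_of_mem_phi hxφ).2 ⟨0, hxx⟩, Option.some_inj]
    exact ⟨by rintro rfl; exact ⟨0, hxx⟩, fun ⟨_, h⟩ => hxx.eq_of_snd h⟩
  · rw [matchTau, if_neg hxφ, if_pos hx]
    classical
    exact dite_choose_eq_some_iff fun _ _ ⟨_, h⟩ ⟨_, h'⟩ => MatchedAt.eq_of_snd h h'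

lemma matchTau_eq_none_iff_of_mem_phi (hp : p ∈ φ) :
    matchTau φ ψ p = none ↔ p ∈ phiInf φ ψ := by
  simp [Option.eq_none_iff_forall_ne_some, matchTau_eq_some_iff_of_mem_phi hp, mem_phiInf_iff, hp,
    forall_comm (α := V d)]

lemma matchTau_eq_none_iff_of_mem_psi (hx : x ∈ ψ) :
    matchTau φ ψ x = none ↔ x ∈ psiInf φ ψ := by
  simp [Option.eq_none_iff_forall_ne_some, matchTau_eq_some_iff_of_mem_psi hx, mem_psiInf_iff, hx,
    forall_comm (α := V d)]

lemma isPartialMatching_matchTau : IsPartialMatching φ ψ (matchTau φ ψ) := by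
  refine ⟨fun p hp x h => ?_, fun x hx p h => ?_, fun p hp x hx => ?_⟩
  · obtain ⟨n, h⟩ := (matchTau_eq_some_iff_of_mem_phi hp).1 h
    exact stages_snd_subset h.2.1
  · obtain ⟨n, h⟩ := (matchTau_eq_some_iff_of_mem_psi hx).1 h
    exact stages_fst_subset h.1
  · rw [matchTau_eq_some_iff_of_mem_phi hp, matchTau_eq_some_iff_of_mem_psi hx]

lemma IsPartialMatching.symm {t : V d → Option (V d)} (ht : IsPartialMatching φ ψ t)
    (hz : z ∈ φ ∪ ψ) (h : t z = some w) : t w = some z := by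
  rcases hz with hz | hz
  · exact (ht.2.2 z hz w (ht.1 z hz w h)).1 h
  · exact (ht.2.2 w (ht.2.1 z hz w h) z hz).2 h

end Matching

lemma iterate_mem_ite_even {α : Type*} {A B : Set α} {g : α → α} (hAB : MapsTo g A B)
    (hBA : MapsTo g B A) {a : α} (ha : a ∈ A) (n : ℕ) :
    g^[n] a ∈ if Even n then A else B := by
  induction n with
  | zero => simpa using ha
  | succ n ih =>
    rw [Function.iterate_succ_apply']
    by_cases hn : Even n
    · rw [if_pos hn] at ih
      rw [if_neg (Nat.even_add_one.not.2 (not_not.2 hn))]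
      exact hAB ih
    · rw [if_neg hn] at ih
      rw [if_pos (Nat.even_add_one.2 hn)]
      exact hBA ih

section Exhaustion

variable {φ ψ : Set (V d)}

lemma disjoint_phiInf_psiInf : Disjoint (phiInf φ ψ) (psiInf φ ψ) :=
  Set.disjoint_left.2 fun z hzφ hzψ =>
    (mem_phiInf_iff.1 hzφ).2 0 z (matchedAt_zero_self (phiInf_subset hzφ) (psiInf_subset hzψ))

lemma not_mutualNN_phiInf_psiInf (hφ : LocFinite φ) (hψ : LocFinite ψ) {p x : V d} :
    ¬ MutualNN (phiInf φ ψ) (psiInf φ ψ) p x := by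
  rintro ⟨hp, hx, hpx, hxp⟩
  have hψ' : ∀ᶠ n in Filter.atTop, ∀ y ∈ {y ∈ ψ | ¬ prefPhi p x y} \ {x},
      y ∉ (stages φ ψ n).2 :=
    (Filter.eventually_all_finite (hψ.finite_setOf_not_prefPhi p x).sdiff).2 fun y hy =>
      eventually_notMem_stages_snd fun hy' => hy.1.2 (hpx y hy' hy.2)
  have hφ' : ∀ᶠ n in Filter.atTop, ∀ q ∈ {q ∈ φ | ¬ prefPsi x p q} \ {p},
      q ∉ (stages φ ψ n).1 :=
    (Filter.eventually_all_finite (hφ.finite_setOf_not_prefPsi x p).sdiff).2 fun q hq =>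
      eventually_notMem_stages_fst fun hq' => hq.1.2 (hxp q hq' hq.2)
  obtain ⟨n, hψn, hφn⟩ := (hψ'.and hφ').exists
  have hmatched : MatchedAt φ ψ n p x :=
    ⟨mem_iInter.1 hp n, mem_iInter.1 hx n,
      fun y hy hyx => by_contra fun h => hψn y ⟨⟨stages_snd_subset hy, h⟩, hyx⟩ hy,
      fun q hq hqp => by_contra fun h => hφn q ⟨⟨stages_fst_subset hq, h⟩, hqp⟩ hq⟩
  exact (mem_phiInf_iff.1 hp).2 n x hmatched

lemma exists_infDescChain (hφ : LocFinite φ) (hψ : LocFinite ψ)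
    (hA : (phiInf φ ψ).Nonempty) (hB : (psiInf φ ψ).Nonempty) :
    ∃ z, InfDescChain φ ψ z := by
  classical
  set A := phiInf φ ψ
  set B := psiInf φ ψ
  choose fB hfB hfB' using (hψ.mono psiInf_subset).exists_forall_prefPhi hB
  choose fA hfA hfA' using (hφ.mono phiInf_subset).exists_forall_prefPsi hA
  have hnot : ∀ p ∈ A, ∀ x ∈ B, fB p = x → fA x ≠ p := by
    intro p hp x hx hpx hxp
    refine not_mutualNN_phiInf_psiInf hφ hψ ⟨hp, hx, ?_, ?_⟩
    · rw [← hpx]; exact hfB' p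
    · rw [← hxp]; exact hfA' x
  let g : V d → V d := fun z => if z ∈ A then fB z else fA z
  have hgA : ∀ z ∈ A, g z = fB z := fun z hz => if_pos hz
  have hgB : ∀ z ∈ B, g z = fA z :=
    fun z hz => if_neg (disjoint_phiInf_psiInf.notMem_of_mem_right hz)
  have hAB : MapsTo g A B := fun z hz => by rw [hgA z hz]; exact hfB z
  have hBA : MapsTo g B A := fun z hz => by rw [hgB z hz]; exact hfA z
  obtain ⟨a, ha⟩ := hA
  refine ⟨fun n => g^[n] a, fun i => ?_, fun i hi => ?_⟩
  · have := iterate_mem_ite_even hAB hBA ha i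
    split_ifs at this ⊢
    exacts [phiInf_subset this, psiInf_subset this]
  · obtain ⟨m, rfl⟩ := Nat.exists_eq_add_of_le' hi
    have hm := iterate_mem_ite_even hAB hBA ha m
    simp only [Nat.add_sub_cancel, Function.iterate_succ_apply']
    by_cases hme : Even m
    · rw [if_pos hme] at hm
      rw [if_neg (Nat.even_add_one.not.2 (not_not.2 hme)), hgB _ (hAB hm)]
      exact hfA' _ _ hm (hnot _ hm _ (hAB hm) (hgA _ hm).symm).symm
    · rw [if_neg hme] at hm
      rw [if_pos (Nat.even_add_one.2 hme), hgA _ (hBA hm)]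
      exact hfB' _ _ hm fun h => hnot _ (hBA hm) _ hm h.symm (hgB _ hm).symm

lemma phiInf_eq_empty_or_psiInf_eq_empty (hφ : LocFinite φ) (hψ : LocFinite ψ)
    (hchain : ¬ ∃ z : ℕ → V d, InfDescChain φ ψ z) :
    phiInf φ ψ = ∅ ∨ psiInf φ ψ = ∅ := by
  simp only [← not_nonempty_iff_eq_empty, ← not_and_or]
  exact fun h => hchain (exists_infDescChain hφ hψ h.1 h.2)

end Exhaustion

section Stability

variable {φ ψ : Set (V d)} {t : V d → Option (V d)} {n : ℕ} {p q x y z : V d}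

lemma isStableMatching_matchTau (hinf : phiInf φ ψ = ∅ ∨ psiInf φ ψ = ∅) :
    IsStableMatching φ ψ (matchTau φ ψ) := by
  refine ⟨isPartialMatching_matchTau, ?_⟩
  rintro ⟨p, hp, x, hx, hxp, hpx⟩
  have hxgone : ∀ n y, MatchedAt φ ψ n p y → x ∉ (stages φ ψ n).2 := fun n y h hxn =>
    h.not_prefPhi hxn (by rwa [(matchTau_eq_some_iff_of_mem_phi hp).2 ⟨n, h⟩] at hpx)
  cases hτx : matchTau φ ψ x with
  | none =>
    have hxinf := (matchTau_eq_none_iff_of_mem_psi hx).1 hτx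
    have hτp : matchTau φ ψ p ≠ none := by
      rw [Ne, matchTau_eq_none_iff_of_mem_phi hp]
      rcases hinf with h | h
      · simp [h]
      · simp [h] at hxinf
    obtain ⟨y, hy⟩ := Option.ne_none_iff_exists'.1 hτp
    obtain ⟨n, hpy⟩ := (matchTau_eq_some_iff_of_mem_phi hp).1 hy
    exact hxgone n y hpy (mem_iInter.1 hxinf n)
  | some q =>
    obtain ⟨m, hqx⟩ := (matchTau_eq_some_iff_of_mem_psi hx).1 hτx
    rw [hτx] at hxp
    obtain ⟨n, hnm, y, hpy⟩ :=
      exists_matchedAt_of_notMem_stages_fst hp fun hpm => hqx.not_prefPsi hpm hxp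
    exact hxgone n y hpy (stages_snd_antitone hnm.le hqx.2.1)

lemma mem_stages_fst_of_eq_some (hagree : ∀ m < n, ∀ p x, MatchedAt φ ψ m p x → t p = some x)
    (hq : q ∈ φ) (hqx : t q = some x) (hx : x ∈ (stages φ ψ n).2) : q ∈ (stages φ ψ n).1 := by
  by_contra hqn
  obtain ⟨m, hm, y, hqy⟩ := exists_matchedAt_of_notMem_stages_fst hq hqn
  obtain rfl : y = x := Option.some_injective _ ((hagree m hm q y hqy).symm.trans hqx)
  exact hqy.notMem_stages_snd hm hx

lemma IsPartialMatching.mem_stages_snd_of_eq_some (ht : IsPartialMatching φ ψ t)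
    (hagree : ∀ m < n, ∀ p x, MatchedAt φ ψ m p x → t p = some x)
    (hp : p ∈ (stages φ ψ n).1) (hpy : t p = some y) : y ∈ (stages φ ψ n).2 := by
  have hpφ := stages_fst_subset hp
  by_contra hyn
  obtain ⟨m, hm, q, hqy⟩ := exists_matchedAt_of_notMem_stages_snd (ht.1 p hpφ y hpy) hyn
  have hyq := ht.symm (Or.inl (stages_fst_subset hqy.1)) (hagree m hm q y hqy)
  obtain rfl : q = p := Option.some_injective _ (hyq.symm.trans (ht.symm (Or.inl hpφ) hpy))
  exact hqy.notMem_stages_fst hm hp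

lemma IsStableMatching.eq_some_of_matchedAt (ht : IsStableMatching φ ψ t)
    (h : MatchedAt φ ψ n p x) : t p = some x := by
  induction n using Nat.strong_induction_on generalizing p x with
  | _ n ih =>
    obtain ⟨hpm, hstable⟩ := ht
    have hagree : ∀ m < n, ∀ p x, MatchedAt φ ψ m p x → t p = some x := fun m hm _ _ => ih m hm
    have hp : p ∈ φ := stages_fst_subset h.1
    have hx : x ∈ ψ := stages_snd_subset h.2.1
    by_contra hne
    refine hstable ⟨p, hp, x, hx, ?_, ?_⟩
    · cases hq : t x with
      | none => trivial
      | some q =>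
        have hqp : q ≠ p := by
          rintro rfl
          exact hne (hpm.symm (Or.inr hx) hq)
        exact h.2.2.2 q (mem_stages_fst_of_eq_some hagree (hpm.2.1 x hx q hq)
          (hpm.symm (Or.inr hx) hq) h.2.1) hqp
    · cases hy : t p with
      | none => trivial
      | some y =>
        have hyx : y ≠ x := by
          rintro rfl
          exact hne hy
        exact h.2.2.1 y (hpm.mem_stages_snd_of_eq_some hagree h.1 hy) hyx

lemma IsStableMatching.eq_some_of_matchTau_eq_some (ht : IsStableMatching φ ψ t)
    (hz : z ∈ φ ∪ ψ) (h : matchTau φ ψ z = some y) : t z = some y := by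
  rcases hz with hz | hz
  · obtain ⟨n, hzy⟩ := (matchTau_eq_some_iff_of_mem_phi hz).1 h
    exact ht.eq_some_of_matchedAt hzy
  · obtain ⟨n, hyz⟩ := (matchTau_eq_some_iff_of_mem_psi hz).1 h
    exact ht.1.symm (Or.inl (stages_fst_subset hyz.1)) (ht.eq_some_of_matchedAt hyz)

lemma IsStableMatching.eq_matchTau (ht : IsStableMatching φ ψ t)
    (hinf : phiInf φ ψ = ∅ ∨ psiInf φ ψ = ∅) (hz : z ∈ φ ∪ ψ) : t z = matchTau φ ψ z := by
  cases hτz : matchTau φ ψ z with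
  | some y => exact ht.eq_some_of_matchTau_eq_some hz hτz
  | none =>
    cases htz : t z with
    | none => rfl
    | some y =>
      -- `z` is unmatched by `τ`, so its `t`-partner `y` lies on the side that `τ` exhausts
      have hy : y ∈ φ ∪ ψ ∧ matchTau φ ψ y ≠ none := by
        rcases hz with hz | hz
        · have hy := ht.1.1 z hz y htz
          rw [matchTau_eq_none_iff_of_mem_phi hz] at hτz
          rw [Ne, matchTau_eq_none_iff_of_mem_psi hy,
            hinf.resolve_left (nonempty_of_mem hτz).ne_empty]
          exact ⟨Or.inr hy, notMem_empty y⟩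
        · have hy := ht.1.2.1 z hz y htz
          rw [matchTau_eq_none_iff_of_mem_psi hz] at hτz
          rw [Ne, matchTau_eq_none_iff_of_mem_phi hy,
            hinf.resolve_right (nonempty_of_mem hτz).ne_empty]
          exact ⟨Or.inl hy, notMem_empty y⟩
      obtain ⟨u, hu⟩ := Option.ne_none_iff_exists'.1 hy.2
      obtain rfl : u = z := Option.some_injective _
        ((ht.eq_some_of_matchTau_eq_some hy.1 hu).symm.trans (ht.1.symm hz htz))
      simpa [hτz] using isPartialMatching_matchTau.symm hy.1 hu

end Stability

/-- If `(φ, ψ)` contains no infinite descending chain, then `φ_∞ = ∅` or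
`ψ_∞ = ∅`, and there is a unique stable partial matching from `φ` to `ψ`, namely the mutual
nearest neighbour matching. -/
theorem statement1 (d : ℕ) (φ ψ : Set (V d))
    (hφ : LocFinite φ) (hψ : LocFinite ψ)
    (hchain : ¬ ∃ z : ℕ → V d, InfDescChain φ ψ z) :
    (phiInf φ ψ = ∅ ∨ psiInf φ ψ = ∅) ∧
    IsStableMatching φ ψ (matchTau φ ψ) ∧
    ∀ t : V d → Option (V d), IsStableMatching φ ψ t →
      ∀ z ∈ φ ∪ ψ, t z = matchTau φ ψ z := by
  have hinf := phiInf_eq_empty_or_psiInf_eq_empty hφ hψ hchain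
  exact ⟨hinf, isStableMatching_matchTau hinf, fun _ ht _ hz => ht.eq_matchTau hinf hz⟩

end
end

section
/- For every dimension d ≥ 1 and every compact convex set K ⊂ ℝ^d, the number of integer lattice points in K differs from the Lebesgue volume of K by at most twice the volume increment under dilation by a ball of radius √d: |λ_d(K) − #(ℤ^d ∩ K)| ≤ 2 (λ_d(K + B(0,√d)) − λ_d(K)), where K + B(0,√d) denotes the Minkowski sum of K with the closed Euclidean ball of radius √d centred at the origin. -/
/-!
Tile `ℝ^d` by the half-open unit cubes `C_k` centred at the lattice points `k`. A cube has
diameter `√d`, so every cube meeting `K` lies in `K + B(0, √d)`. If `k ∈ K`, then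
`1 = λ(C_k ∩ K) + λ(C_k \ K)`. If `k ∉ K`, convexity makes `K` disjoint from its reflection
through `k`, so `K` fills at most half of `C_k` and `λ(C_k ∩ K) ≤ λ(C_k \ K)`. Either way the
discrepancy between `λ(C_k ∩ K)` and `[k ∈ K]` is at most `λ(C_k ∩ ((K + B(0, √d)) \ K))`, and
summing over `k` gives the bound even with constant `1`.
-/

open MeasureTheory Set Metric
open scoped ENNReal ENat NNReal Pointwise

noncomputable section

variable {d : ℕ}

theorem Convex.measure_inter_add_measure_inter_le {E : Type*} [AddCommGroup E] [Module ℝ E]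
    [MeasurableSpace E] [MeasurableAdd E] [MeasurableNeg E] (μ : Measure E)
    [μ.IsAddLeftInvariant] [μ.IsNegInvariant] {K Q : Set E} {p : E} (hK : Convex ℝ K)
    (hKm : MeasurableSet K) (hp : p ∉ K) (hQ : (p + p - ·) ⁻¹' Q = Q) :
    μ (Q ∩ K) + μ (Q ∩ K) ≤ μ Q := by
  -- `K` and its reflection through `p` are disjoint, otherwise `p` would be a midpoint in `K`.
  have hdisj : Disjoint K ((p + p - ·) ⁻¹' K) := by
    refine disjoint_left.2 fun x hx hx' => hp ?_
    convert hK hx hx' (by norm_num : (0 : ℝ) ≤ 2⁻¹) (by norm_num : (0 : ℝ) ≤ 2⁻¹) (by norm_num)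
      using 1
    module
  calc μ (Q ∩ K) + μ (Q ∩ K)
      = μ (Q ∩ K) + μ ((p + p - ·) ⁻¹' (Q ∩ K)) := by
        rw [(Measure.measurePreserving_sub_left μ (p + p)).measure_preimage_emb
          (measurableEmbedding_subLeft _)]
    _ ≤ μ (Q ∩ K) + μ (Q \ K) := by
        rw [preimage_inter, hQ]
        gcongr μ (Q ∩ K) + μ ?_
        exact fun x hx => ⟨hx.1, hdisj.notMem_of_mem_right hx.2⟩
    _ = μ Q := measure_inter_add_sdiff Q hKm

theorem ENNReal.abs_toReal_sub_toReal_le {a b c : ℝ≥0∞} (hb : b ≠ ∞) (hc : c ≠ ∞)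
    (hab : a ≤ b + c) (hba : b ≤ a + c) : |a.toReal - b.toReal| ≤ c.toReal := by
  have ha : a ≠ ∞ := ne_top_of_le_ne_top (add_ne_top.2 ⟨hb, hc⟩) hab
  have h₁ := toReal_mono (add_ne_top.2 ⟨hb, hc⟩) hab
  have h₂ := toReal_mono (add_ne_top.2 ⟨ha, hc⟩) hba
  rw [toReal_add hb hc] at h₁
  rw [toReal_add ha hc] at h₂
  exact abs_sub_le_iff.2 ⟨by linarith, by linarith⟩

def latticeCube (k : Fin d → ℤ) : Set (V d) :=
  WithLp.ofLp ⁻¹' univ.pi fun i => Ico ((k i : ℝ) - 2⁻¹) (k i + 2⁻¹)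

-- Unlike `latticeCube k`, invariant under the point reflection through its centre `k`.
def closedLatticeCube (k : Fin d → ℤ) : Set (V d) :=
  WithLp.ofLp ⁻¹' univ.pi fun i => Icc ((k i : ℝ) - 2⁻¹) (k i + 2⁻¹)

theorem mem_latticeCube {k : Fin d → ℤ} {x : V d} :
    x ∈ latticeCube k ↔ ∀ i, x i ∈ Ico ((k i : ℝ) - 2⁻¹) (k i + 2⁻¹) := by
  simp only [latticeCube, mem_preimage, mem_univ_pi]

theorem mem_closedLatticeCube {k : Fin d → ℤ} {x : V d} :
    x ∈ closedLatticeCube k ↔ ∀ i, x i ∈ Icc ((k i : ℝ) - 2⁻¹) (k i + 2⁻¹) := by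
  simp only [closedLatticeCube, mem_preimage, mem_univ_pi]

theorem measurableSet_latticeCube (k : Fin d → ℤ) : MeasurableSet (latticeCube k) :=
  (PiLp.volume_preserving_ofLp (Fin d)).measurable (.univ_pi fun _ => measurableSet_Ico)

theorem volume_latticeCube (k : Fin d → ℤ) : volume (latticeCube k) = 1 := by
  rw [latticeCube, (PiLp.volume_preserving_ofLp (Fin d)).measure_preimage
    (MeasurableSet.univ_pi fun _ => measurableSet_Ico).nullMeasurableSet]
  simp only [volume_pi_pi, Real.volume_Ico]
  norm_num

theorem volume_closedLatticeCube (k : Fin d → ℤ) : volume (closedLatticeCube k) = 1 := by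
  rw [closedLatticeCube, (PiLp.volume_preserving_ofLp (Fin d)).measure_preimage
    (MeasurableSet.univ_pi fun _ => measurableSet_Icc).nullMeasurableSet]
  simp only [volume_pi_pi, Real.volume_Icc]
  norm_num

theorem latticeCube_subset_closedLatticeCube (k : Fin d → ℤ) :
    latticeCube k ⊆ closedLatticeCube k := fun _ hx =>
  mem_closedLatticeCube.2 fun i => Ico_subset_Icc_self (mem_latticeCube.1 hx i)

theorem intVec_mem_latticeCube (k : Fin d → ℤ) : intVec k ∈ latticeCube k :=
  mem_latticeCube.2 fun i => by simp [intVec]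

theorem preimage_reflection_closedLatticeCube (k : Fin d → ℤ) :
    (intVec k + intVec k - ·) ⁻¹' closedLatticeCube k = closedLatticeCube k := by
  ext x
  simp only [mem_preimage, mem_closedLatticeCube, mem_Icc, intVec]
  refine forall_congr' fun i => ?_
  simp only [PiLp.sub_apply, PiLp.add_apply]
  constructor <;> rintro ⟨h₁, h₂⟩ <;> constructor <;> linarith

theorem iUnion_latticeCube : ⋃ k : Fin d → ℤ, latticeCube k = univ := by
  refine eq_univ_of_forall fun x =>
    mem_iUnion.2 ⟨fun i => ⌊x i + 2⁻¹⌋, mem_latticeCube.2 fun i => ?_⟩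
  have h₁ := Int.floor_le (x i + 2⁻¹)
  have h₂ := Int.lt_floor_add_one (x i + 2⁻¹)
  constructor <;> linarith

theorem pairwise_disjoint_latticeCube :
    Pairwise (Function.onFun Disjoint (latticeCube : (Fin d → ℤ) → Set (V d))) := by
  refine fun k l hkl => disjoint_left.2 fun x hk hl => hkl (funext fun i => ?_)
  obtain ⟨hk₁, hk₂⟩ := mem_latticeCube.1 hk i
  obtain ⟨hl₁, hl₂⟩ := mem_latticeCube.1 hl i
  have : k i < l i + 1 := by exact_mod_cast (by linarith : (k i : ℝ) < l i + 1)
  have : l i < k i + 1 := by exact_mod_cast (by linarith : (l i : ℝ) < k i + 1)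
  omega

theorem tsum_volume_latticeCube_inter {A : Set (V d)} (hA : MeasurableSet A) :
    ∑' k, volume (latticeCube k ∩ A) = volume A := by
  rw [← measure_iUnion (fun k l hkl => (pairwise_disjoint_latticeCube hkl).mono
    inter_subset_left inter_subset_left) fun k => (measurableSet_latticeCube k).inter hA,
    ← iUnion_inter, iUnion_latticeCube, univ_inter]

theorem dist_le_sqrt_of_mem_latticeCube {k : Fin d → ℤ} {x y : V d} (hx : x ∈ latticeCube k)
    (hy : y ∈ latticeCube k) : dist x y ≤ √d := by
  rw [EuclideanSpace.dist_eq]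
  refine Real.sqrt_le_sqrt ?_
  calc ∑ i, dist (x i) (y i) ^ 2 ≤ ∑ _i : Fin d, (1 : ℝ) := Finset.sum_le_sum fun i _ => ?_
    _ = d := by simp
  obtain ⟨hx₁, hx₂⟩ := mem_latticeCube.1 hx i
  obtain ⟨hy₁, hy₂⟩ := mem_latticeCube.1 hy i
  rw [Real.dist_eq, sq_abs]
  nlinarith

theorem latticeCube_subset_add_closedBall {K : Set (V d)} {k : Fin d → ℤ}
    (hk : (latticeCube k ∩ K).Nonempty) : latticeCube k ⊆ K + closedBall 0 √d := by
  obtain ⟨y, hyC, hyK⟩ := hk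
  refine fun x hx => ⟨y, hyK, x - y, ?_, add_sub_cancel y x⟩
  rw [mem_closedBall, dist_zero_right, ← dist_eq_norm]
  exact dist_le_sqrt_of_mem_latticeCube hx hyC

theorem latticeCube_diff_subset {K : Set (V d)} {k : Fin d → ℤ}
    (hk : (latticeCube k ∩ K).Nonempty) :
    latticeCube k \ K ⊆ latticeCube k ∩ ((K + closedBall 0 √d) \ K) :=
  fun _ hx => ⟨hx.1, latticeCube_subset_add_closedBall hk hx.1, hx.2⟩

theorem volume_latticeCube_inter_le {K : Set (V d)} (hK : Convex ℝ K) (hKm : MeasurableSet K)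
    (k : Fin d → ℤ) :
    volume (latticeCube k ∩ K) ≤
      (intVec ⁻¹' K).indicator 1 k + volume (latticeCube k ∩ ((K + closedBall 0 √d) \ K)) := by
  by_cases hk : k ∈ intVec ⁻¹' K
  · calc volume (latticeCube k ∩ K) ≤ volume (latticeCube k) := measure_mono inter_subset_left
      _ = (intVec ⁻¹' K).indicator 1 k := by rw [volume_latticeCube, indicator_of_mem hk]; rfl
      _ ≤ _ := le_self_add
  rcases (latticeCube k ∩ K).eq_empty_or_nonempty with hempty | hmeets
  · simp [hempty]
  have hhalf : volume (latticeCube k ∩ K) + volume (latticeCube k ∩ K) ≤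
      volume (latticeCube k ∩ K) + volume (latticeCube k \ K) :=
    calc _ ≤ volume (closedLatticeCube k ∩ K) + volume (closedLatticeCube k ∩ K) := by
          gcongr <;> exact latticeCube_subset_closedLatticeCube k
      _ ≤ volume (closedLatticeCube k) :=
          hK.measure_inter_add_measure_inter_le volume hKm hk
            (preimage_reflection_closedLatticeCube k)
      _ = _ := by
          rw [volume_closedLatticeCube, ← volume_latticeCube k, measure_inter_add_sdiff _ hKm]
  have hfin : volume (latticeCube k ∩ K) ≠ ∞ :=
    ne_top_of_le_ne_top (by simp [volume_latticeCube]) (measure_mono inter_subset_left)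
  calc volume (latticeCube k ∩ K) ≤ volume (latticeCube k \ K) :=
        (ENNReal.add_le_add_iff_left hfin).1 hhalf
    _ ≤ volume (latticeCube k ∩ ((K + closedBall 0 √d) \ K)) :=
        measure_mono (latticeCube_diff_subset hmeets)
    _ ≤ _ := le_add_self

theorem indicator_le_volume_latticeCube_inter {K : Set (V d)} (hKm : MeasurableSet K)
    (k : Fin d → ℤ) :
    (intVec ⁻¹' K).indicator 1 k ≤
      volume (latticeCube k ∩ K) + volume (latticeCube k ∩ ((K + closedBall 0 √d) \ K)) := by
  by_cases hk : k ∈ intVec ⁻¹' K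
  · calc (intVec ⁻¹' K).indicator 1 k
          = volume (latticeCube k ∩ K) + volume (latticeCube k \ K) := by
          rw [indicator_of_mem hk, measure_inter_add_sdiff _ hKm, volume_latticeCube]; rfl
      _ ≤ _ := by
          gcongr
          exact latticeCube_diff_subset ⟨intVec k, intVec_mem_latticeCube k, hk⟩
  · simp [indicator_of_notMem hk]

theorem intVec_injective : Function.Injective (intVec (d := d)) := fun k l h =>
  funext fun i => by simpa [intVec] using congrArg (fun x : V d => x i) h

theorem ncard_lattice_inter (K : Set (V d)) :
    (lattice d ∩ K).ncard = (intVec ⁻¹' K).ncard := by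
  rw [show lattice d = range intVec from rfl, ← image_preimage_eq_range_inter,
    ncard_image_of_injective _ intVec_injective]

theorem ENNReal.tsum_indicator_one {α : Type*} (s : Set α) :
    ∑' a, s.indicator 1 a = (s.encard : ℝ≥0∞) := by
  rw [← tsum_subtype, ← ENNReal.tsum_set_one]
  rfl

theorem volume_le_encard_add_volume_add_closedBall_diff {K : Set (V d)} (hK : IsCompact K)
    (hKc : Convex ℝ K) :
    volume K ≤ (intVec ⁻¹' K).encard + volume ((K + closedBall 0 √d) \ K) := by
  have hD := (hK.add (isCompact_closedBall 0 √d)).measurableSet.diff hK.measurableSet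
  rw [← tsum_volume_latticeCube_inter hK.measurableSet, ← tsum_volume_latticeCube_inter hD,
    ← ENNReal.tsum_indicator_one, ← ENNReal.tsum_add]
  exact ENNReal.tsum_le_tsum (volume_latticeCube_inter_le hKc hK.measurableSet)

theorem encard_le_volume_add_volume_add_closedBall_diff {K : Set (V d)} (hK : IsCompact K) :
    (intVec ⁻¹' K).encard ≤ volume K + volume ((K + closedBall 0 √d) \ K) := by
  have hD := (hK.add (isCompact_closedBall 0 √d)).measurableSet.diff hK.measurableSet
  rw [← tsum_volume_latticeCube_inter hK.measurableSet, ← tsum_volume_latticeCube_inter hD,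
    ← ENNReal.tsum_indicator_one, ← ENNReal.tsum_add]
  exact ENNReal.tsum_le_tsum (indicator_le_volume_latticeCube_inter hK.measurableSet)

theorem abs_volume_sub_ncard_lattice_inter_le {K : Set (V d)} (hK : IsCompact K)
    (hKc : Convex ℝ K) :
    |(volume K).toReal - ((lattice d ∩ K).ncard : ℝ)| ≤
      (volume (K + closedBall 0 √d)).toReal - (volume K).toReal := by
  have hcount := encard_le_volume_add_volume_add_closedBall_diff hK
  set D := (K + closedBall (0 : V d) √d) \ K
  have hT := hK.add (isCompact_closedBall (0 : V d) √d)
  have hKfin : volume K ≠ ∞ := hK.measure_ne_top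
  have hDfin : volume D ≠ ∞ := ne_top_of_le_ne_top hT.measure_ne_top (measure_mono sdiff_subset)
  have hfinite : (intVec ⁻¹' K).Finite :=
    encard_ne_top_iff.1 fun h => by simp [h, hKfin, hDfin] at hcount
  have hsplit : (volume (K + closedBall 0 √d)).toReal = (volume K).toReal + (volume D).toReal := by
    rw [← ENNReal.toReal_add hKfin hDfin, ← measure_union disjoint_sdiff_right
      (hT.measurableSet.diff hK.measurableSet),
      union_sdiff_cancel (subset_add_left K (mem_closedBall_self (Real.sqrt_nonneg d)))]
  have hncard : ((lattice d ∩ K).ncard : ℝ) = ((intVec ⁻¹' K).encard : ℝ≥0∞).toReal := by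
    rw [ncard_lattice_inter, ← hfinite.cast_ncard_eq]
    rfl
  rw [hsplit, add_sub_cancel_left, hncard]
  exact ENNReal.abs_toReal_sub_toReal_le (by simpa using hfinite) hDfin
    (volume_le_encard_add_volume_add_closedBall_diff hK hKc) hcount

theorem statement8_general (d : ℕ) (K : Set (V d))
    (hK : IsCompact K) (hKc : Convex ℝ K) :
    |(volume K).toReal - ((lattice d ∩ K).ncard : ℝ)| ≤
      2 * ((volume (K + closedBall (0 : V d) (Real.sqrt d))).toReal - (volume K).toReal) := by
  have hgrowth : (volume K).toReal ≤ (volume (K + closedBall (0 : V d) √d)).toReal :=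
    ENNReal.toReal_mono (hK.add (isCompact_closedBall _ _)).measure_ne_top
      (measure_mono (subset_add_left K (mem_closedBall_self (Real.sqrt_nonneg d))))
  linarith [abs_volume_sub_ncard_lattice_inter_le hK hKc]

/-- For every dimension `d ≥ 1` and every compact convex `K ⊆ ℝ^d`,
`|λ_d(K) − #(ℤ^d ∩ K)| ≤ 2 (λ_d(K + B(0,√d)) − λ_d(K))`. -/
theorem statement8 (d : ℕ) (hd : 1 ≤ d) (K : Set (V d))
    (hK : IsCompact K) (hKc : Convex ℝ K) :
    |(volume K).toReal - ((lattice d ∩ K).ncard : ℝ)| ≤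
      2 * ((volume (K + closedBall (0 : V d) (Real.sqrt d))).toReal - (volume K).toReal) :=
  statement8_general d K hK hKc
end
end
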